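/- arXiv:2407.11526 — 8 statements merged into one kernel-verified Lean document; each statement's English description precedes it below -/
import Mathlib

section
/- Let a ∈ ℂ and let (i,j) be one of the index pairs (1,6), (2,5), (3,4). Then the following are equivalent: (1) for every nonzero z = (z₁,…,z₆) ∈ ℂ⁶ satisfying z₁z₆ + z₂z₅ + z₃z₄ = 0, one has ∑_{k=1}^{6} |z_k|² + 2·Re(a·conj(z_i)·z_j) > 0; (2) |a| < 2. -/
/-!
On the quadric, `z_i z_j` is minus the sum of the other two pair products, so
`|z_i| |z_j| ≤ |z_k| |z_l| + |z_m| |z_n|`, and AM-GM on each pair gives `4 |z_i| |z_j| ≤ ‖z‖²`.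
Hence `|2 Re(a z̄_i z_j)| ≤ (|a| / 2) ‖z‖² < ‖z‖²` when `|a| < 2`. Conversely, if `|a| ≥ 2`, pick
`|w| = 1` with `a w = -|a|`; then `(1, 1, 0, 0, -w, w)` lies on the quadric and the form takes
the value `4 - 2 |a| ≤ 0` there for the pair `(1, 6)`. The other two pairs reduce to this one by
a permutation of coordinates preserving the quadric.
-/

open ComplexConjugate

theorem four_mul_norm_mul_le_of_add_add_eq_zero {𝕜 : Type*} [NormedDivisionRing 𝕜] {u v x y p q : 𝕜}
    (h : u * v + x * y + p * q = 0) :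
    4 * (‖u‖ * ‖v‖) ≤ ‖u‖ ^ 2 + ‖v‖ ^ 2 + ‖x‖ ^ 2 + ‖y‖ ^ 2 + ‖p‖ ^ 2 + ‖q‖ ^ 2 := by
  have huv : ‖u‖ * ‖v‖ ≤ ‖x‖ * ‖y‖ + ‖p‖ * ‖q‖ :=
    calc ‖u‖ * ‖v‖ = ‖x * y + p * q‖ := by
          rw [← norm_mul, ← norm_neg, neg_eq_of_add_eq_zero_right (by rwa [add_assoc] at h)]
      _ ≤ ‖x‖ * ‖y‖ + ‖p‖ * ‖q‖ := (norm_add_le _ _).trans_eq (by rw [norm_mul, norm_mul])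
  nlinarith [sq_nonneg (‖u‖ - ‖v‖), sq_nonneg (‖x‖ - ‖y‖), sq_nonneg (‖p‖ - ‖q‖)]

theorem Complex.neg_norm_mul_le_re (a b : ℂ) : -(‖a‖ * ‖b‖) ≤ (a * b).re := by
  rw [← norm_mul]
  exact neg_le_of_abs_le (Complex.abs_re_le_norm _)

theorem Complex.exists_norm_eq_one_re_mul_eq_neg_norm (a : ℂ) :
    ∃ w : ℂ, ‖w‖ = 1 ∧ (a * w).re = -‖a‖ := by
  refine ⟨-exp (↑(-a.arg) * I), by rw [norm_neg, norm_exp_ofReal_mul_I], ?_⟩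
  nth_rw 1 [← norm_mul_exp_arg_mul_I a]
  rw [mul_neg, mul_assoc, ← exp_add]
  simp

def kleinForm (z : Fin 6 → ℂ) : ℂ := z 0 * z 5 + z 1 * z 4 + z 2 * z 3

noncomputable def hermitianForm (a : ℂ) (i j : Fin 6) (z : Fin 6 → ℂ) : ℝ :=
  ∑ k, ‖z k‖ ^ 2 + 2 * (a * conj (z i) * z j).re

def PosOnQuadric (a : ℂ) (i j : Fin 6) : Prop :=
  ∀ z : Fin 6 → ℂ, z ≠ 0 → kleinForm z = 0 → 0 < hermitianForm a i j z

theorem hermitianForm_comp (a : ℂ) (i j : Fin 6) (σ : Equiv.Perm (Fin 6)) (z : Fin 6 → ℂ) :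
    hermitianForm a i j (z ∘ σ) = hermitianForm a (σ i) (σ j) z := by
  simp only [hermitianForm, Function.comp_apply, Equiv.sum_comp σ (fun k => ‖z k‖ ^ 2)]

theorem posOnQuadric_perm_iff {σ : Equiv.Perm (Fin 6)} (hσ : ∀ z, kleinForm (z ∘ σ) = kleinForm z)
    (a : ℂ) (i j : Fin 6) : PosOnQuadric a (σ i) (σ j) ↔ PosOnQuadric a i j := by
  have comp_ne_zero {z : Fin 6 → ℂ} (τ : Equiv.Perm (Fin 6)) (hz : z ≠ 0) : z ∘ τ ≠ 0 :=
    fun h0 => hz (funext fun k => by simpa using congrFun h0 (τ.symm k))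
  constructor
  · intro h z hz hq
    have hpos := h (z ∘ σ.symm) (comp_ne_zero σ.symm hz) (by rwa [← hσ, Function.comp_assoc,
      Equiv.symm_comp_self, Function.comp_id])
    rwa [← hermitianForm_comp, Function.comp_assoc, Equiv.symm_comp_self, Function.comp_id]
      at hpos
  · intro h z hz hq
    rw [← hermitianForm_comp]
    exact h _ (comp_ne_zero σ hz) (by rwa [hσ])

theorem exists_perm_kleinForm_comp_eq {i j : Fin 6}
    (hij : (i, j) = (0, 5) ∨ (i, j) = (1, 4) ∨ (i, j) = (2, 3)) :
    ∃ σ : Equiv.Perm (Fin 6), (∀ z, kleinForm (z ∘ σ) = kleinForm z) ∧ σ 0 = i ∧ σ 5 = j := by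
  simp only [Prod.mk.injEq] at hij
  rcases hij with ⟨rfl, rfl⟩ | ⟨rfl, rfl⟩ | ⟨rfl, rfl⟩
  · exact ⟨1, fun z => rfl, rfl, rfl⟩
  · refine ⟨Equiv.swap 0 1 * Equiv.swap 4 5, fun z => ?_, rfl, rfl⟩
    show z 1 * z 4 + z 0 * z 5 + z 2 * z 3 = kleinForm z
    rw [kleinForm]
    ring
  · refine ⟨Equiv.swap 0 2 * Equiv.swap 3 5, fun z => ?_, rfl, rfl⟩
    show z 2 * z 3 + z 1 * z 4 + z 0 * z 5 = kleinForm z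
    rw [kleinForm]
    ring

theorem posOnQuadric_of_norm_lt_two {a : ℂ} (ha : ‖a‖ < 2) : PosOnQuadric a 0 5 := by
  intro z hz hq
  have hS : 0 < ∑ k, ‖z k‖ ^ 2 := by
    obtain ⟨k, hk⟩ := Function.ne_iff.mp hz
    exact (pow_pos (norm_pos_iff.mpr hk) 2).trans_le
      (Finset.single_le_sum (f := fun k => ‖z k‖ ^ 2) (fun _ _ => by positivity)
        (Finset.mem_univ k))
  have hpair := four_mul_norm_mul_le_of_add_add_eq_zero hq
  have hre := Complex.neg_norm_mul_le_re a (conj (z 0) * z 5)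
  rw [norm_mul, Complex.norm_conj] at hre
  rw [Fin.sum_univ_six] at hS
  rw [hermitianForm, Fin.sum_univ_six, mul_assoc a]
  nlinarith [mul_le_mul_of_nonneg_left hpair (norm_nonneg a), mul_lt_mul_of_pos_right ha hS]

theorem norm_lt_two_of_posOnQuadric {a : ℂ} (h : PosOnQuadric a 0 5) : ‖a‖ < 2 := by
  by_contra! ha
  obtain ⟨w, hw, haw⟩ := Complex.exists_norm_eq_one_re_mul_eq_neg_norm a
  have hval : hermitianForm a 0 5 ![1, 1, 0, 0, -w, w] = 4 + 2 * (a * w).re := by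
    simp [hermitianForm, Fin.sum_univ_six, hw]
    norm_num
  have hpos := h ![1, 1, 0, 0, -w, w] (fun h0 => one_ne_zero (congrFun h0 0))
    (by simp [kleinForm])
  linarith

/-- Indices are 0-based, so the pairs `(1,6), (2,5), (3,4)` of the paper become
`(0,5), (1,4), (2,3)`. -/
theorem transverse_iff_abs_lt_two (a : ℂ) (i j : Fin 6)
    (hij : (i, j) = (0, 5) ∨ (i, j) = (1, 4) ∨ (i, j) = (2, 3)) :
    (∀ z : Fin 6 → ℂ, z ≠ 0 →
        z 0 * z 5 + z 1 * z 4 + z 2 * z 3 = 0 →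
        0 < ∑ k, ‖z k‖ ^ 2 + 2 * (a * (starRingEnd ℂ) (z i) * z j).re) ↔
      ‖a‖ < 2 := by
  obtain ⟨σ, hσ, rfl, rfl⟩ := exists_perm_kleinForm_comp_eq hij
  exact (posOnQuadric_perm_iff hσ a 0 5).trans
    ⟨norm_lt_two_of_posOnQuadric, posOnQuadric_of_norm_lt_two⟩
end

section
/- For every a ∈ ℂ and every z = (z₁,…,z₆) ∈ ℂ⁶ satisfying z₁z₆ + z₂z₅ + z₃z₄ = 0, one has ∑_{k=1}^{6} |z_k|² + 2·Re(a·conj(z₂)·z₅) ≥ 2·(2 − |a|)·|z₂|·|z₅|. -/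
/-!
On the quadric, `z₂z₅ = -(z₁z₆ + z₃z₄)`, so `|z₂||z₅| ≤ |z₁||z₆| + |z₃||z₄|`. Pairing the squares
as `|z_k|² + |z_{7-k}|² ≥ 2|z_k||z_{7-k}|` therefore bounds `∑ |z_k|²` below by `4|z₂||z₅|`,
while `2 Re(a conj(z₂) z₅) ≥ -2|a||z₂||z₅|`.
-/

theorem norm_mul_norm_le_of_add_add_eq_zero {R : Type*} [NormedRing R] [NormMulClass R]
    {a b c d e f : R} (h : a * b + c * d + e * f = 0) :
    ‖c‖ * ‖d‖ ≤ ‖a‖ * ‖b‖ + ‖e‖ * ‖f‖ := by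
  have hcd : c * d = -(a * b + e * f) := by
    rw [← sub_eq_zero, sub_neg_eq_add, ← h]; abel
  calc ‖c‖ * ‖d‖ = ‖a * b + e * f‖ := by rw [← norm_mul, hcd, norm_neg]
    _ ≤ ‖a‖ * ‖b‖ + ‖e‖ * ‖f‖ := (norm_add_le _ _).trans_eq (by rw [norm_mul, norm_mul])

theorem Complex.neg_norm_mul_le_re_mul_conj_mul (a u v : ℂ) :
    -(‖a‖ * ‖u‖ * ‖v‖) ≤ (a * (starRingEnd ℂ) u * v).re := by
  have h := Complex.abs_re_le_norm (a * (starRingEnd ℂ) u * v)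
  rw [norm_mul, norm_mul, Complex.norm_conj] at h
  exact neg_le_of_abs_le h

/-- Key estimate: on the quadric `z₁z₆ + z₂z₅ + z₃z₄ = 0` (0-based indices),
the Hermitian form `∑ |z_k|² + 2 Re(a conj(z₂) z₅)` is at least
`2(2 − |a|)|z₂||z₅|`. -/
theorem quadric_hermitian_form_lower_bound (a : ℂ) (z : Fin 6 → ℂ)
    (hz : z 0 * z 5 + z 1 * z 4 + z 2 * z 3 = 0) :
    2 * (2 - ‖a‖) * (‖z 1‖ * ‖z 4‖) ≤
      ∑ k, ‖z k‖ ^ 2 + 2 * (a * (starRingEnd ℂ) (z 1) * z 4).re := by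
  have h_quadric := norm_mul_norm_le_of_add_add_eq_zero hz
  have h_cross := Complex.neg_norm_mul_le_re_mul_conj_mul a (z 1) (z 4)
  have h₀₅ := two_mul_le_add_sq ‖z 0‖ ‖z 5‖
  have h₁₄ := two_mul_le_add_sq ‖z 1‖ ‖z 4‖
  have h₂₃ := two_mul_le_add_sq ‖z 2‖ ‖z 3‖
  rw [Fin.sum_univ_six]
  linarith
end

section
/- Let a ∈ ℂ with |a| < 2. Then for every nonzero z = (z₁,…,z₆) ∈ ℂ⁶ satisfying z₁z₆ + z₂z₅ + z₃z₄ = 0, one has ∑_{k=1}^{6} |z_k|² + 2·Re(a·conj(z₂)·z₅) > 0. -/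
/-!
On the quadric, `z₂z₅ = -(z₁z₆ + z₃z₄)` and AM-GM give `2|z₂||z₅| ≤ |z₁|² + |z₆|² + |z₃|² + |z₄|²`,
while `2|z₂||z₅| ≤ |z₂|² + |z₅|²`; hence `4|z₂||z₅| ≤ ∑ |z_k|²`. The cross term is at least
`-2|a||z₂||z₅| ≥ -(|a|/2) ∑ |z_k|²`, so the form is at least `(1 - |a|/2) ∑ |z_k|² > 0`.
-/

open ComplexConjugate

lemma norm_mul_le_of_add_add_eq_zero {R : Type*} [NormedDivisionRing R] {a b c d e f : R}
    (h : a * b + c * d + e * f = 0) : ‖c‖ * ‖d‖ ≤ ‖a‖ * ‖b‖ + ‖e‖ * ‖f‖ := by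
  have hcd : c * d = -(a * b + e * f) := by rw [← sub_eq_zero, ← h]; abel
  calc ‖c‖ * ‖d‖ = ‖a * b + e * f‖ := by rw [← norm_mul, hcd, norm_neg]
    _ ≤ ‖a * b‖ + ‖e * f‖ := norm_add_le _ _
    _ = ‖a‖ * ‖b‖ + ‖e‖ * ‖f‖ := by rw [norm_mul, norm_mul]

lemma four_mul_norm_mul_le_sum_norm_sq {R : Type*} [NormedDivisionRing R] {z : Fin 6 → R}
    (hQ : z 0 * z 5 + z 1 * z 4 + z 2 * z 3 = 0) :
    4 * (‖z 1‖ * ‖z 4‖) ≤ ∑ k, ‖z k‖ ^ 2 := by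
  have hquad := norm_mul_le_of_add_add_eq_zero hQ
  rw [Fin.sum_univ_six]
  nlinarith [two_mul_le_add_sq ‖z 0‖ ‖z 5‖, two_mul_le_add_sq ‖z 1‖ ‖z 4‖,
    two_mul_le_add_sq ‖z 2‖ ‖z 3‖]

lemma sum_norm_sq_pos {ι E : Type*} [Fintype ι] [NormedAddCommGroup E] {z : ι → E}
    (hz : z ≠ 0) : 0 < ∑ k, ‖z k‖ ^ 2 := by
  obtain ⟨k, hk⟩ := Function.ne_iff.mp hz
  exact Finset.sum_pos' (fun i _ => by positivity)
    ⟨k, Finset.mem_univ k, pow_pos (norm_pos_iff.mpr hk) 2⟩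

lemma neg_norm_mul_le_re_mul_conj_mul (a w z : ℂ) :
    -(‖a‖ * (‖w‖ * ‖z‖)) ≤ (a * conj w * z).re := by
  have h := neg_le_of_abs_le (Complex.abs_re_le_norm (a * conj w * z))
  simpa [mul_assoc] using h

/-- Sufficiency: if `|a| < 2`, the Hermitian form
`∑ |z_k|² + 2 Re(a conj(z₂) z₅)` is strictly positive at every nonzero point of
the quadric `z₁z₆ + z₂z₅ + z₃z₄ = 0` (0-based indices). -/
theorem hermitian_form_pos_of_abs_lt_two (a : ℂ) (ha : ‖a‖ < 2)
    (z : Fin 6 → ℂ) (hz : z ≠ 0)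
    (hQ : z 0 * z 5 + z 1 * z 4 + z 2 * z 3 = 0) :
    0 < ∑ k, ‖z k‖ ^ 2 + 2 * (a * (starRingEnd ℂ) (z 1) * z 4).re := by
  have hS := sum_norm_sq_pos hz
  have hquad := four_mul_norm_mul_le_sum_norm_sq hQ
  have hcross := neg_norm_mul_le_re_mul_conj_mul a (z 1) (z 4)
  have hp : 0 ≤ ‖z 1‖ * ‖z 4‖ := by positivity
  nlinarith [mul_le_mul_of_nonneg_left ha.le hp]
end

section
/- Let a ∈ ℂ with a ≠ 0. Then there exists a nonzero z = (z₁,…,z₆) ∈ ℂ⁶ such that z₁z₆ + z₂z₅ + z₃z₄ = 0, conj(z₂)·z₅ = −conj(a), and ∑_{k=1}^{6} |z_k|² + 2·Re(a·conj(z₂)·z₅) = 2·|a|·(2 − |a|). -/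
/-! With `r = √|a|`, the point `(r, r, 0, 0, -w, w)`, `w = conj(a)/r`, lies on the quadric, has
`conj(z₂) z₅ = -conj(a)` and all four nonzero coordinates of modulus `r`. Hence the Hermitian form
takes the value `4r² + 2 Re(-a conj(a)) = 4|a| - 2|a|²`. -/

open ComplexConjugate

noncomputable def quadricWitness (u w : ℂ) : Fin 6 → ℂ := ![u, u, 0, 0, -w, w]

section quadricWitness

variable (u w : ℂ)

theorem quadricWitness_ne_zero {u : ℂ} (hu : u ≠ 0) : quadricWitness u w ≠ 0 :=
  fun h => hu (congrFun h 0)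

theorem quadricWitness_mem_quadric :
    quadricWitness u w 0 * quadricWitness u w 5 + quadricWitness u w 1 * quadricWitness u w 4 +
      quadricWitness u w 2 * quadricWitness u w 3 = 0 := by
  simp [quadricWitness]

theorem conj_quadricWitness_one_mul_four :
    conj (quadricWitness u w 1) * quadricWitness u w 4 = -(conj u * w) := by
  simp [quadricWitness]

theorem sum_norm_sq_quadricWitness :
    ∑ k, ‖quadricWitness u w k‖ ^ 2 = 2 * ‖u‖ ^ 2 + 2 * ‖w‖ ^ 2 := by
  simp only [quadricWitness, Fin.sum_univ_six, Matrix.cons_val_zero, Matrix.cons_val_one,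
    Matrix.cons_val, norm_zero, ne_eq, OfNat.ofNat_ne_zero, not_false_eq_true, zero_pow, add_zero,
    norm_neg]
  ring

end quadricWitness

theorem Complex.re_mul_neg_conj (a : ℂ) : (a * -conj a).re = -‖a‖ ^ 2 := by
  rw [mul_neg, Complex.mul_conj, Complex.normSq_eq_norm_sq, Complex.neg_re, Complex.ofReal_re]

/-- Explicit witness for necessity: for `a ≠ 0` there is a nonzero point of the
quadric `z₁z₆ + z₂z₅ + z₃z₄ = 0` (0-based indices) with `conj(z₂) z₅ = −conj a`
on which the Hermitian form takes the value `2|a|(2 − |a|)`. -/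
theorem exists_witness_on_quadric (a : ℂ) (ha : a ≠ 0) :
    ∃ z : Fin 6 → ℂ, z ≠ 0 ∧
      z 0 * z 5 + z 1 * z 4 + z 2 * z 3 = 0 ∧
      (starRingEnd ℂ) (z 1) * z 4 = -(starRingEnd ℂ) a ∧
      ∑ k, ‖z k‖ ^ 2 + 2 * (a * (starRingEnd ℂ) (z 1) * z 4).re =
        2 * ‖a‖ * (2 - ‖a‖) := by
  set r : ℝ := √‖a‖
  have hr : 0 < r := Real.sqrt_pos.2 (norm_pos_iff.2 ha)
  have hr_sq : r ^ 2 = ‖a‖ := Real.sq_sqrt (norm_nonneg a)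
  set w : ℂ := conj a / r
  have hrw : conj (r : ℂ) * w = conj a := by
    rw [Complex.conj_ofReal]
    exact mul_div_cancel₀ _ (by exact_mod_cast hr.ne')
  have hw : ‖w‖ = r := by
    rw [norm_div, Complex.norm_conj, Complex.norm_real, Real.norm_of_nonneg hr.le, ← hr_sq]
    field_simp
  have hconj : conj (quadricWitness r w 1) * quadricWitness r w 4 = -conj a := by
    rw [conj_quadricWitness_one_mul_four, hrw]
  refine ⟨quadricWitness r w, quadricWitness_ne_zero w (by exact_mod_cast hr.ne'),
    quadricWitness_mem_quadric r w, hconj, ?_⟩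
  rw [sum_norm_sq_quadricWitness, mul_assoc, hconj, Complex.re_mul_neg_conj, Complex.norm_real,
    Real.norm_of_nonneg hr.le, hw, ← hr_sq]
  ring
end

section
/- Let a ∈ ℂ with |a| ≥ 2. Then there exists a nonzero z = (z₁,…,z₆) ∈ ℂ⁶ such that z₁z₆ + z₂z₅ + z₃z₄ = 0 and ∑_{k=1}^{6} |z_k|² + 2·Re(a·conj(z₂)·z₅) ≤ 0. -/
/-!
On the points `(1, 1, 0, 0, -w, w)` of the quadric the form equals `2 + 2‖w‖² - 2 Re(a w)`,
which is minimised at `w = ā / 2` with value `2 - ‖a‖² / 2`; this is `≤ 0` exactly when `‖a‖ ≥ 2`.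
-/

open ComplexConjugate

def quadricPoint (w : ℂ) : Fin 6 → ℂ := ![1, 1, 0, 0, -w, w]

lemma quadricPoint_ne_zero (w : ℂ) : quadricPoint w ≠ 0 :=
  fun h => one_ne_zero (congrFun h 0)

lemma quadricPoint_mem_quadric (w : ℂ) :
    quadricPoint w 0 * quadricPoint w 5 + quadricPoint w 1 * quadricPoint w 4
      + quadricPoint w 2 * quadricPoint w 3 = 0 := by
  simp [quadricPoint]

lemma hermitianForm_quadricPoint (a w : ℂ) :
    ∑ k, ‖quadricPoint w k‖ ^ 2 + 2 * (a * conj (quadricPoint w 1) * quadricPoint w 4).re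
      = 2 + 2 * ‖w‖ ^ 2 - 2 * (a * w).re := by
  simp only [quadricPoint, Fin.sum_univ_six, Matrix.cons_val_zero, Matrix.cons_val_one,
    Matrix.cons_val, norm_one, norm_zero, norm_neg, one_pow, ne_eq, OfNat.ofNat_ne_zero,
    not_false_eq_true, zero_pow, add_zero, map_one, mul_one, mul_neg, Complex.neg_re]
  ring

lemma re_mul_conj_half (a : ℂ) : (a * (conj a / 2)).re = ‖a‖ ^ 2 / 2 := by
  rw [← mul_div_assoc, Complex.mul_conj, Complex.normSq_eq_norm_sq]
  norm_cast

/-- Necessity: if `|a| ≥ 2`, the Hermitian form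
`∑ |z_k|² + 2 Re(a conj(z₂) z₅)` fails strict positivity at some nonzero point
of the quadric `z₁z₆ + z₂z₅ + z₃z₄ = 0` (0-based indices). -/
theorem exists_nonpos_on_quadric_of_two_le_abs (a : ℂ) (ha : 2 ≤ ‖a‖) :
    ∃ z : Fin 6 → ℂ, z ≠ 0 ∧
      z 0 * z 5 + z 1 * z 4 + z 2 * z 3 = 0 ∧
      ∑ k, ‖z k‖ ^ 2 + 2 * (a * (starRingEnd ℂ) (z 1) * z 4).re ≤ 0 := by
  refine ⟨quadricPoint (conj a / 2), quadricPoint_ne_zero _, quadricPoint_mem_quadric _, ?_⟩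
  rw [hermitianForm_quadricPoint, re_mul_conj_half, norm_div, Complex.norm_conj,
    Complex.norm_two]
  nlinarith
end

section
/- Let A, B, C, D, E, N ∈ ℂ satisfy |A|² + |D|² + |E|² + 2·Re(conj(B)·C) = 0 and (conj(C) − conj(B))/2 − N·conj(E) = 0. If N = 0 or E = 0 or B = 0 or C = 0, then A = B = C = D = E = 0. -/
/-!
The SKT equation is a sum of squares `‖A‖² + ‖D‖² + ‖E‖²` plus the cross term `2 Re(B̄C)`, which
becomes `2‖B‖² ≥ 0` once `B = C`, so then everything vanishes. The 2-symplectic equation gives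
`B = C` as soon as `N Ē = 0`. If `N = 0` or `E = 0` we are done; if `B = 0` or `C = 0`, the cross
term vanishes, so the SKT equation already forces `E = 0`.
-/

open ComplexConjugate

lemma eq_zero_of_add_sq_norm_eq_zero {G : Type*} [NormedAddCommGroup G] {a b c : G} {r : ℝ}
    (h : ‖a‖ ^ 2 + ‖b‖ ^ 2 + ‖c‖ ^ 2 + r = 0) (hr : 0 ≤ r) :
    a = 0 ∧ b = 0 ∧ c = 0 ∧ r = 0 := by
  have ha := sq_nonneg ‖a‖
  have hb := sq_nonneg ‖b‖
  have hc := sq_nonneg ‖c‖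
  refine ⟨?_, ?_, ?_, by linarith⟩ <;> rw [← norm_eq_zero, ← sq_eq_zero_iff] <;> linarith

lemma Complex.re_conj_mul_self (z : ℂ) : (conj z * z).re = ‖z‖ ^ 2 := by
  rw [Complex.conj_mul']
  norm_cast

lemma eq_of_conj_sub_div_two_sub_mul_eq_zero {B C N E : ℂ}
    (h : (conj C - conj B) / 2 - N * conj E = 0) (hNE : N = 0 ∨ E = 0) : B = C := by
  have hNE' : N * conj E = 0 := by rcases hNE with rfl | rfl <;> simp
  rw [hNE', sub_zero, div_eq_zero_iff, sub_eq_zero] at h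
  exact ((RingHom.injective _) (h.resolve_right two_ne_zero)).symm

/-- Degenerate cases of the SKT + 2-symplectic system on 6-dimensional
nilmanifolds force all structure constants to vanish (the torus case). -/
theorem skt_two_symplectic_degenerate (A B C D E N : ℂ)
    (h1 : ‖A‖ ^ 2 + ‖D‖ ^ 2 + ‖E‖ ^ 2 +
        2 * ((starRingEnd ℂ) B * C).re = 0)
    (h2 : ((starRingEnd ℂ) C - (starRingEnd ℂ) B) / 2 - N * (starRingEnd ℂ) E = 0)
    (h3 : N = 0 ∨ E = 0 ∨ B = 0 ∨ C = 0) :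
    A = 0 ∧ B = 0 ∧ C = 0 ∧ D = 0 ∧ E = 0 := by
  have hNE : N = 0 ∨ E = 0 := by
    rcases h3 with hN | hE | hBC
    · exact .inl hN
    · exact .inr hE
    · have hcross : (conj B * C).re = 0 := by rcases hBC with rfl | rfl <;> simp
      rw [hcross, mul_zero] at h1
      exact .inr (eq_zero_of_add_sq_norm_eq_zero h1 le_rfl).2.2.1
  obtain rfl := eq_of_conj_sub_div_two_sub_mul_eq_zero h2 hNE
  rw [Complex.re_conj_mul_self] at h1
  obtain ⟨rfl, rfl, rfl, hB⟩ := eq_zero_of_add_sq_norm_eq_zero h1 (by positivity)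
  obtain rfl : B = 0 := by simpa using hB
  exact ⟨rfl, rfl, rfl, rfl, rfl⟩
end

section
/- Let N ∈ ℂ with |N| > 1 and let C ∈ ℂ with C ≠ 0. Then there exist B, E ∈ ℂ, both nonzero, such that |E|² + 2·Re(conj(B)·C) = 0 and (conj(C) − conj(B))/2 − N·conj(E) = 0. -/
/-!
Look for solutions on the real line `B = (1 - 2r) C`, `E = r C / conj N` (`r : ℝ`). The second
equation then holds identically, and the first becomes `‖C‖² / ‖N‖²` times the real quadratic
`r² - 4‖N‖² r + 2‖N‖²`, whose discriminant is nonnegative as soon as `‖N‖² ≥ 1/2`. Its larger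
root `r = 2‖N‖² + √(4‖N‖⁴ - 2‖N‖²)` is at least `1`, so neither `r` nor `1 - 2r` vanishes.
-/

open ComplexConjugate

lemma exists_one_le_root_sq_sub_four_mul_add_two_mul (m : ℝ) (hm : 1 / 2 ≤ m) :
    ∃ r : ℝ, 1 ≤ r ∧ r ^ 2 - 4 * m * r + 2 * m = 0 := by
  have hdisc : 0 ≤ 4 * m ^ 2 - 2 * m := by nlinarith
  refine ⟨2 * m + √(4 * m ^ 2 - 2 * m), by linarith [Real.sqrt_nonneg (4 * m ^ 2 - 2 * m)], ?_⟩
  linear_combination Real.sq_sqrt hdisc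

lemma conj_sub_div_two_sub_mul_conj_eq_zero (N C : ℂ) (hN : N ≠ 0) (r : ℝ) :
    (conj C - conj ((1 - 2 * r) * C)) / 2 - N * conj (r * C / conj N) = 0 := by
  simp only [map_div₀, map_mul, map_sub, map_one, map_ofNat, Complex.conj_ofReal,
    Complex.conj_conj]
  field_simp
  ring

lemma norm_sq_add_two_re_conj_mul (N C : ℂ) (r : ℝ) :
    ‖(r * C / conj N : ℂ)‖ ^ 2 + 2 * (conj ((1 - 2 * r) * C) * C).re
      = (r ^ 2 / ‖N‖ ^ 2 + 2 - 4 * r) * ‖C‖ ^ 2 := by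
  have hre : (conj ((1 - 2 * r : ℂ) * C) * C).re = (1 - 2 * r) * ‖C‖ ^ 2 := by
    have hprod : conj ((1 - 2 * r : ℂ) * C) * C = ((1 - 2 * r) * ‖C‖ ^ 2 : ℝ) := by
      rw [map_mul, mul_assoc, Complex.conj_mul']
      push_cast
      simp only [map_sub, map_one, map_mul, map_ofNat, Complex.conj_ofReal]
    rw [hprod, Complex.ofReal_re]
  rw [hre, norm_div, norm_mul, Complex.norm_conj, Complex.norm_real, Real.norm_eq_abs,
    div_pow, mul_pow, sq_abs]
  ring

/-- Nontrivial solvability of the SKT + 2-symplectic system: for `|N| > 1` and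
`C ≠ 0` there are nonzero `B, E` solving the system. -/
theorem exists_nontrivial_skt_two_symplectic (N C : ℂ)
    (hN : 1 < ‖N‖) (hC : C ≠ 0) :
    ∃ B E : ℂ, B ≠ 0 ∧ E ≠ 0 ∧
      ‖E‖ ^ 2 + 2 * ((starRingEnd ℂ) B * C).re = 0 ∧
      ((starRingEnd ℂ) C - (starRingEnd ℂ) B) / 2 - N * (starRingEnd ℂ) E = 0 := by
  have hN0 : N ≠ 0 := norm_pos_iff.mp (one_pos.trans hN)
  have hNsq : 1 < ‖N‖ ^ 2 := one_lt_pow₀ hN two_ne_zero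
  obtain ⟨r, hr1, hroot⟩ :=
    exists_one_le_root_sq_sub_four_mul_add_two_mul (‖N‖ ^ 2) (by linarith)
  refine ⟨(1 - 2 * r) * C, r * C / conj N, ?_, ?_, ?_,
    conj_sub_div_two_sub_mul_conj_eq_zero N C hN0 r⟩
  · refine mul_ne_zero ?_ hC
    exact_mod_cast (show (1 - 2 * r : ℝ) ≠ 0 by linarith)
  · refine div_ne_zero (mul_ne_zero ?_ hC) ((map_ne_zero _).mpr hN0)
    exact_mod_cast (show r ≠ 0 by linarith)
  · rw [norm_sq_add_two_re_conj_mul]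
    have hcoeff : r ^ 2 / ‖N‖ ^ 2 + 2 - 4 * r = 0 := by
      field_simp
      linear_combination hroot
    rw [hcoeff, zero_mul]
end

section
/- Let a₂, a₃, a₅, a₁₀, a₁₂, M ∈ ℂ satisfy |a₂|² + |a₅|² + |a₁₀|² = 2·Re(a₃·conj(a₁₂)) and (3/4)·i·(a₃ + a₁₂) + conj(M)·a₂ = 0. If a₂ = 0 or a₃ = 0 or a₁₂ = 0 or M = 0, then a₂ = a₃ = a₅ = a₁₀ = a₁₂ = 0. -/
/-!
If `a₃ + a₁₂ = 0`, the right-hand side of the first equation becomes `-2‖a₃‖²`, so a sum of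
squares of norms vanishes and everything is zero. The second equation gives `a₃ + a₁₂ = 0` as soon
as `a₂ = 0` or `M = 0`, and when `a₃ = 0` or `a₁₂ = 0` the first equation already forces `a₂ = 0`.
-/

open ComplexConjugate

namespace ThreeSymplectic

variable {a₂ a₃ a₅ a₁₀ a₁₂ M : ℂ}

lemma re_mul_conj_neg (z : ℂ) : (z * conj (-z)).re = -‖z‖ ^ 2 := by
  rw [map_neg, mul_neg, Complex.mul_conj, Complex.neg_re, Complex.ofReal_re, Complex.sq_norm]

lemma eq_zero_of_add_eq_zero
    (h1 : ‖a₂‖ ^ 2 + ‖a₅‖ ^ 2 + ‖a₁₀‖ ^ 2 = 2 * (a₃ * conj a₁₂).re) (hs : a₃ + a₁₂ = 0) :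
    a₂ = 0 ∧ a₃ = 0 ∧ a₅ = 0 ∧ a₁₀ = 0 ∧ a₁₂ = 0 := by
  obtain rfl : a₁₂ = -a₃ := eq_neg_of_add_eq_zero_right hs
  rw [re_mul_conj_neg] at h1
  have n₂ := sq_nonneg ‖a₂‖
  have n₃ := sq_nonneg ‖a₃‖
  have n₅ := sq_nonneg ‖a₅‖
  have n₁₀ := sq_nonneg ‖a₁₀‖
  have h₂ : ‖a₂‖ ^ 2 = 0 := by linarith
  have h₃ : ‖a₃‖ ^ 2 = 0 := by linarith
  have h₅ : ‖a₅‖ ^ 2 = 0 := by linarith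
  have h₁₀ : ‖a₁₀‖ ^ 2 = 0 := by linarith
  simp_all

lemma add_eq_zero_of_conj_mul_eq_zero
    (h2 : (3 / 4) * Complex.I * (a₃ + a₁₂) + conj M * a₂ = 0) (h : conj M * a₂ = 0) :
    a₃ + a₁₂ = 0 := by
  rw [h, add_zero] at h2
  exact (mul_eq_zero.mp h2).resolve_left (by simp)

lemma eq_zero_of_mul_conj_eq_zero
    (h1 : ‖a₂‖ ^ 2 + ‖a₅‖ ^ 2 + ‖a₁₀‖ ^ 2 = 2 * (a₃ * conj a₁₂).re) (h : a₃ * conj a₁₂ = 0) :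
    a₂ = 0 := by
  rw [h, Complex.zero_re, mul_zero] at h1
  have := sq_nonneg ‖a₅‖
  have := sq_nonneg ‖a₁₀‖
  have := sq_nonneg ‖a₂‖
  have : ‖a₂‖ ^ 2 = 0 := by linarith
  simpa using this

end ThreeSymplectic

/-- Degenerate cases of the reduced 3-symplectic + SKT + Astheno-Kähler system
on 8-dimensional nilmanifolds force all remaining structure constants to
vanish (the torus case). -/
theorem three_symplectic_degenerate (a₂ a₃ a₅ a₁₀ a₁₂ M : ℂ)
    (h1 : ‖a₂‖ ^ 2 + ‖a₅‖ ^ 2 + ‖a₁₀‖ ^ 2 =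
        2 * (a₃ * (starRingEnd ℂ) a₁₂).re)
    (h2 : (3 / 4) * Complex.I * (a₃ + a₁₂) + (starRingEnd ℂ) M * a₂ = 0)
    (h3 : a₂ = 0 ∨ a₃ = 0 ∨ a₁₂ = 0 ∨ M = 0) :
    a₂ = 0 ∧ a₃ = 0 ∧ a₅ = 0 ∧ a₁₀ = 0 ∧ a₁₂ = 0 := by
  have hdeg : a₂ = 0 ∨ M = 0 := by
    rcases h3 with h | h | h | h
    · exact .inl h
    · exact .inl (ThreeSymplectic.eq_zero_of_mul_conj_eq_zero h1 (by simp [h]))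
    · exact .inl (ThreeSymplectic.eq_zero_of_mul_conj_eq_zero h1 (by simp [h]))
    · exact .inr h
  have hs : a₃ + a₁₂ = 0 :=
    ThreeSymplectic.add_eq_zero_of_conj_mul_eq_zero h2 (by rcases hdeg with h | h <;> simp [h])
  exact ThreeSymplectic.eq_zero_of_add_eq_zero h1 hs
end
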